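/- arXiv:1902.04642 — 2 statements merged into one kernel-verified Lean document; each statement's English description precedes it below -/
import Mathlib

section
/- Every subgroup G of SL(2,ℝ) that contains two noncommuting elements (i.e., every nonabelian subgroup) is contracting: there exist g₁, g₂, … ∈ G such that ‖gₙ‖⁻¹gₙ converges to a rank-one matrix as n → ∞. -/
open Matrix Filter Topology

/-- `SL(2,ℝ)`. -/
abbrev SL2R := Matrix.SpecialLinearGroup (Fin 2) ℝ

attribute [local instance] Matrix.normedAddCommGroup

/-- A submodule of `ℝ²` is a line if it is one-dimensional. -/
def IsLine (ℓ : Submodule ℝ (Fin 2 → ℝ)) : Prop := Module.finrank ℝ ℓ = 1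

/-- The action of a `2 × 2` matrix on lines in `ℝ²` (elements of `ℝP¹`). -/
noncomputable def lineAct (A : Matrix (Fin 2) (Fin 2) ℝ) (ℓ : Submodule ℝ (Fin 2 → ℝ)) :
    Submodule ℝ (Fin 2 → ℝ) :=
  ℓ.map (Matrix.toLin' A)

/-- A subgroup `G ⊆ SL(2,ℝ)` is contracting if there is a sequence `gₙ ∈ G` such that
`‖gₙ‖⁻¹ • gₙ` converges to a rank-one matrix. -/
def IsContracting (G : Subgroup SL2R) : Prop :=
  ∃ g : ℕ → SL2R, (∀ n, g n ∈ G) ∧ ∃ M : Matrix (Fin 2) (Fin 2) ℝ, M.rank = 1 ∧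
    Tendsto (fun n => ‖((g n : SL2R) : Matrix (Fin 2) (Fin 2) ℝ)‖⁻¹ •
      ((g n : SL2R) : Matrix (Fin 2) (Fin 2) ℝ)) atTop (𝓝 M)

/-- A subgroup `G ⊆ SL(2,ℝ)` is type-F if it is contracting and there is no set `Λ ⊆ ℝP¹` of
cardinality one or two invariant under every element of `G`. -/
def IsTypeF (G : Subgroup SL2R) : Prop :=
  IsContracting G ∧
  ¬ ∃ Λ : Set (Submodule ℝ (Fin 2 → ℝ)),
      (∀ ℓ ∈ Λ, IsLine ℓ) ∧ (Λ.ncard = 1 ∨ Λ.ncard = 2) ∧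
      ∀ g ∈ G, lineAct ((g : SL2R) : Matrix (Fin 2) (Fin 2) ℝ) '' Λ = Λ

/-!
An element `A ∈ SL(2,ℝ)` with `|tr A| ≥ 2` and `A ≠ ±1` has powers of unbounded norm: if
`tr A = 2` then `A = 1 + N` with `N ^ 2 = 0`, so `A ^ k = 1 + k • N`; if `tr A > 2` the recurrence
`tr A ^ (k + 2) = tr A * tr A ^ (k + 1) - tr A ^ k` makes `tr A ^ k` grow linearly.
If `a, b ∈ G` do not commute, either `a` is such an element, or `|tr a| < 2` and then
`⁅a, b⁆` is one, since `tr ⁅a, b⁆ = 2 - det (ab - ba) > 2`: the traceless matrix `ab - ba` is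
orthogonal to `a` for the trace form, and on that plane `-det` is positive definite because `a`
has no real eigenvalue.
Finally, if `‖gₙ‖ → ∞` in `SL(2,ℝ)`, a limit point of `‖gₙ‖⁻¹ • gₙ` lies on the unit sphere and
has determinant `lim ‖gₙ‖⁻² = 0`, so it has rank one.
-/

attribute [local instance] Matrix.normedSpace

open scoped commutatorElement

namespace Matrix

section Field

variable {n K : Type*} [Fintype n] [DecidableEq n] [Field K]

theorem rank_lt_card_of_det_eq_zero {M : Matrix n n K} (hdet : M.det = 0) :
    M.rank < Fintype.card n := by
  obtain ⟨v, hv, hMv⟩ := exists_mulVec_eq_zero_iff.mpr hdet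
  have hker : 0 < Module.finrank K (LinearMap.ker M.mulVecLin) :=
    Module.finrank_pos_iff_exists_ne_zero.mpr ⟨⟨v, hMv⟩, by simpa [Subtype.ext_iff] using hv⟩
  have := LinearMap.finrank_range_add_finrank_ker M.mulVecLin
  rw [Module.finrank_pi] at this
  unfold rank
  omega

theorem rank_pos_of_ne_zero {M : Matrix n n K} (hM : M ≠ 0) : 0 < M.rank := by
  rw [Nat.pos_iff_ne_zero, rank, Ne, Submodule.finrank_eq_zero, LinearMap.range_eq_bot,
    ← toLin'_apply', LinearEquiv.map_eq_zero_iff]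
  exact hM

theorem rank_fin_two_eq_one {M : Matrix (Fin 2) (Fin 2) K} (hM : M ≠ 0) (hdet : M.det = 0) :
    M.rank = 1 := by
  have := rank_lt_card_of_det_eq_zero hdet
  have := rank_pos_of_ne_zero hM
  rw [Fintype.card_fin] at *
  omega

end Field

section CommRing

variable {R : Type*} [CommRing R]

theorem sq_eq_trace_smul_sub_det_smul (A : Matrix (Fin 2) (Fin 2) R) : A ^ 2 = A.trace • A - A.det • 1 := by
  nontriviality R
  have h := A.aeval_self_charpoly
  simp only [charpoly_fin_two, map_add, map_sub, map_pow, Polynomial.aeval_X, map_mul,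
    Polynomial.aeval_C, Algebra.algebraMap_eq_smul_one] at h
  rw [← sub_eq_zero, ← h]
  simp only [smul_mul_assoc, one_mul]
  abel

theorem trace_pow_add_two_fin_two {A : Matrix (Fin 2) (Fin 2) R} (hdet : A.det = 1) (k : ℕ) :
    (A ^ (k + 2)).trace = A.trace * (A ^ (k + 1)).trace - (A ^ k).trace := by
  rw [pow_add, sq_eq_trace_smul_sub_det_smul, hdet, one_smul, mul_sub, mul_one, mul_smul_comm, ← pow_succ,
    trace_sub, trace_smul, smul_eq_mul]

theorem det_sub_one_fin_two (A : Matrix (Fin 2) (Fin 2) R) :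
    (A - 1).det = A.det - A.trace + 1 := by
  simp only [det_fin_two, trace_fin_two, sub_apply, one_apply_eq, ne_eq, zero_ne_one,
    not_false_eq_true, one_apply_ne, one_ne_zero]
  ring

theorem one_add_pow_of_mul_self_eq_zero [Fintype n] [DecidableEq n] {N : Matrix n n R}
    (hN : N * N = 0) (k : ℕ) : (1 + N) ^ k = 1 + k • N := by
  induction k with
  | zero => simp
  | succ k ih =>
    rw [pow_succ, ih, add_mul, one_mul, mul_add, mul_one, smul_mul_assoc, hN, smul_zero,
      add_zero, succ_nsmul]
    abel

end CommRing

theorem norm_trace_le {n α : Type*} [Fintype n] [NormedAddCommGroup α] (A : Matrix n n α) :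
    ‖A.trace‖ ≤ Fintype.card n * ‖A‖ :=
  calc ‖A.trace‖ ≤ ∑ i, ‖A i i‖ := norm_sum_le _ _
    _ ≤ ∑ _i : n, ‖A‖ := Finset.sum_le_sum fun _ _ => norm_entry_le_entrywise_sup_norm A
    _ = Fintype.card n * ‖A‖ := by rw [Finset.sum_const, Finset.card_univ, nsmul_eq_mul]

theorem det_mul_sub_mul_neg_of_sq_trace_lt {A B : Matrix (Fin 2) (Fin 2) ℝ}
    (hA : A.trace ^ 2 < 4 * A.det) (hAB : A * B ≠ B * A) : (A * B - B * A).det < 0 := by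
  obtain ⟨a, b, c, d, rfl⟩ : ∃ a b c d, A = !![a, b; c, d] := ⟨_, _, _, _, A.eta_fin_two⟩
  obtain ⟨p, q, r, t, rfl⟩ : ∃ p q r t, B = !![p, q; r, t] := ⟨_, _, _, _, B.eta_fin_two⟩
  rw [trace_fin_two_of, det_fin_two_of] at hA
  set x := b * r - c * q
  set y := (a - d) * q - b * (p - t)
  set z := c * (p - t) - (a - d) * r
  have hxyz : !![a, b; c, d] * !![p, q; r, t] - !![p, q; r, t] * !![a, b; c, d] =
      !![x, y; z, -x] := by
    ext i j; fin_cases i <;> fin_cases j <;> simp [x, y, z] <;> ring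
  rw [Ne, ← sub_eq_zero, hxyz] at hAB
  rw [hxyz, det_fin_two_of]
  have hD : 0 < 4 * (a * d - b * c) - (a + d) ^ 2 := by linarith
  have hc : c ≠ 0 := by rintro rfl; nlinarith [sq_nonneg (a - d)]
  have hrel : c * y + (a - d) * x + b * z = 0 := by ring
  -- complete the square after eliminating `y` by `hrel`; the coefficient of `z ^ 2` is
  -- minus the discriminant of `A`
  have key : 4 * c ^ 2 * (x ^ 2 + y * z) =
      ((a - d) * z - 2 * c * x) ^ 2 + (4 * (a * d - b * c) - (a + d) ^ 2) * z ^ 2 := by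
    linear_combination (-4 * c * z) * hrel
  by_contra! hdet
  have hS : ((a - d) * z - 2 * c * x) ^ 2 + (4 * (a * d - b * c) - (a + d) ^ 2) * z ^ 2 ≤ 0 := by
    rw [← key]; nlinarith [sq_nonneg c]
  have hz : z = 0 := by
    by_contra hz
    nlinarith [sq_nonneg ((a - d) * z - 2 * c * x), mul_pos hD (by positivity : 0 < z ^ 2)]
  have hx : x = 0 := by
    rw [hz] at hS
    have : (2 * c * x) ^ 2 = 0 := le_antisymm (by nlinarith) (sq_nonneg _)
    simpa [hc] using this
  have hy : y = 0 := by
    rw [hx, hz] at hrel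
    simpa [hc] using hrel
  exact hAB (by rw [hx, hy, hz, neg_zero]; exact (eta_fin_two 0).symm)

theorem tendsto_norm_one_add_pow_atTop [Fintype n] [DecidableEq n] {N : Matrix n n ℝ}
    (hN : N * N = 0) (hN0 : N ≠ 0) : Tendsto (fun k : ℕ => ‖(1 + N) ^ k‖) atTop atTop := by
  refine tendsto_atTop_mono (fun k => ?_) <|
    tendsto_atTop_add_const_right _ (-‖(1 : Matrix n n ℝ)‖) <|
    tendsto_natCast_atTop_atTop.atTop_mul_const (norm_pos_iff.mpr hN0)
  rw [one_add_pow_of_mul_self_eq_zero hN, ← sub_eq_add_neg, ← Nat.cast_smul_eq_nsmul ℝ]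
  calc (k : ℝ) * ‖N‖ - ‖(1 : Matrix n n ℝ)‖ = ‖(k : ℝ) • N‖ - ‖(1 : Matrix n n ℝ)‖ := by
        rw [norm_smul, Real.norm_natCast]
    _ ≤ ‖1 + (k : ℝ) • N‖ := by
        simpa [add_comm] using norm_sub_norm_le ((k : ℝ) • N) (-1)

theorem two_add_mul_le_trace_pow {A : Matrix (Fin 2) (Fin 2) ℝ} (hdet : A.det = 1)
    (htr : 2 ≤ A.trace) (k : ℕ) : 2 + k * (A.trace - 2) ≤ (A ^ k).trace := by
  suffices 2 + k * (A.trace - 2) ≤ (A ^ k).trace ∧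
      (A ^ k).trace + (A.trace - 2) ≤ (A ^ (k + 1)).trace from this.1
  induction k with
  | zero => simp [trace_one]
  | succ k ih =>
    refine ⟨by push_cast; linarith [ih.2], ?_⟩
    rw [trace_pow_add_two_fin_two hdet]
    have hT : 0 ≤ (A ^ (k + 1)).trace := by nlinarith [ih.1, ih.2]
    nlinarith [ih.2, mul_nonneg (sub_nonneg.2 htr) hT]

theorem tendsto_norm_pow_atTop_of_two_lt_trace {A : Matrix (Fin 2) (Fin 2) ℝ}
    (hdet : A.det = 1) (htr : 2 < A.trace) : Tendsto (fun k : ℕ => ‖A ^ k‖) atTop atTop := by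
  refine tendsto_atTop_mono (fun k => ?_) <| tendsto_atTop_add_const_right _ 1 <|
    tendsto_natCast_atTop_atTop.atTop_mul_const (by linarith : 0 < (A.trace - 2) / 2)
  have := norm_trace_le (A ^ k)
  have := two_add_mul_le_trace_pow hdet htr.le k
  rw [Fintype.card_fin, Nat.cast_ofNat, Real.norm_eq_abs] at *
  linarith [le_abs_self (A ^ k).trace]

theorem tendsto_norm_pow_atTop_of_trace_eq_two {A : Matrix (Fin 2) (Fin 2) ℝ}
    (hdet : A.det = 1) (htr : A.trace = 2) (h1 : A ≠ 1) :
    Tendsto (fun k : ℕ => ‖A ^ k‖) atTop atTop := by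
  have hN : (A - 1) * (A - 1) = 0 :=
    calc (A - 1) * (A - 1) = A ^ 2 - 2 • A + 1 := by noncomm_ring
      _ = 0 := by rw [sq_eq_trace_smul_sub_det_smul, hdet, htr]; module
  simpa using tendsto_norm_one_add_pow_atTop hN (sub_ne_zero.mpr h1)

theorem tendsto_norm_pow_atTop_of_two_le_abs_trace {A : Matrix (Fin 2) (Fin 2) ℝ}
    (hdet : A.det = 1) (htr : 2 ≤ |A.trace|) (h1 : A ≠ 1) (hm1 : A ≠ -1) :
    Tendsto (fun k : ℕ => ‖A ^ k‖) atTop atTop := by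
  wlog hpos : 2 ≤ A.trace generalizing A
  · have hneg : A.trace ≤ -2 := by cases abs_cases A.trace <;> linarith
    refine (this (A := -A) (by simp [det_neg, hdet]) (by simpa using htr) ?_ ?_ ?_).congr
      fun k => ?_
    · exact fun h => hm1 (neg_eq_iff_eq_neg.mp h)
    · simpa using h1
    · simpa using neg_le_neg hneg
    · rcases k.even_or_odd with hk | hk <;> simp [hk.neg_pow]
  rcases hpos.eq_or_lt with heq | hlt
  · exact tendsto_norm_pow_atTop_of_trace_eq_two hdet heq.symm h1
  · exact tendsto_norm_pow_atTop_of_two_lt_trace hdet hlt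

theorem SpecialLinearGroup.trace_commutatorElement_fin_two {R : Type*} [CommRing R]
    (a b : SpecialLinearGroup (Fin 2) R) :
    ((⁅a, b⁆ : SpecialLinearGroup (Fin 2) R) : Matrix (Fin 2) (Fin 2) R).trace =
      2 - ((a : Matrix (Fin 2) (Fin 2) R) * b - b * a).det := by
  have hK : ⁅a, b⁆ * (b * a) = a * b := by rw [commutatorElement_def]; group
  have : (a : Matrix (Fin 2) (Fin 2) R) * b - b * a =
      ((⁅a, b⁆ : SpecialLinearGroup (Fin 2) R) - 1) * (b * a) := by
    rw [sub_mul, one_mul, ← SpecialLinearGroup.coe_mul, ← SpecialLinearGroup.coe_mul,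
      ← SpecialLinearGroup.coe_mul, hK]
  rw [this, det_mul, det_sub_one_fin_two, ← SpecialLinearGroup.coe_mul,
    SpecialLinearGroup.det_coe, SpecialLinearGroup.det_coe]
  ring

end Matrix

theorem isContracting_of_tendsto_norm {G : Subgroup SL2R} {g : ℕ → SL2R} (hg : ∀ n, g n ∈ G)
    (h : Tendsto (fun n => ‖((g n : SL2R) : Matrix (Fin 2) (Fin 2) ℝ)‖) atTop atTop) :
    IsContracting G := by
  set u : ℕ → Matrix (Fin 2) (Fin 2) ℝ := fun n =>
    ‖((g n : SL2R) : Matrix (Fin 2) (Fin 2) ℝ)‖⁻¹ • ((g n : SL2R) : Matrix (Fin 2) (Fin 2) ℝ)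
  have hpos (n : ℕ) : 0 < ‖((g n : SL2R) : Matrix (Fin 2) (Fin 2) ℝ)‖ :=
    norm_pos_iff.mpr fun h0 => by simpa [h0] using (g n).2
  have hu (n : ℕ) : u n ∈ Metric.sphere 0 1 := by simp [u, norm_smul, (hpos n).ne']
  obtain ⟨M, hM, φ, hφ, hlim⟩ := tendsto_subseq_of_bounded Metric.isBounded_sphere hu
  rw [Metric.isClosed_sphere.closure_eq] at hM
  have hdet : M.det = 0 := by
    have hdet_u (n : ℕ) : (u n).det = ‖((g n : SL2R) : Matrix (Fin 2) (Fin 2) ℝ)‖⁻¹ ^ 2 := by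
      simp [u]
    refine tendsto_nhds_unique ((continuous_id.matrix_det.tendsto M).comp hlim) ?_
    simpa [Function.comp_def, hdet_u] using
      ((h.comp hφ.tendsto_atTop).inv_tendsto_atTop).pow 2
  have hM0 : M ≠ 0 := ne_zero_of_mem_sphere one_ne_zero ⟨M, hM⟩
  exact ⟨g ∘ φ, fun n => hg (φ n), M, rank_fin_two_eq_one hM0 hdet, hlim⟩

/-- Every nonabelian subgroup of `SL(2,ℝ)` is contracting. -/
theorem isContracting_of_nonabelian (G : Subgroup SL2R)
    (hG : ∃ a ∈ G, ∃ b ∈ G, a * b ≠ b * a) :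
    IsContracting G := by
  obtain ⟨a, ha, b, hb, hab⟩ := hG
  have hAB : (a : Matrix (Fin 2) (Fin 2) ℝ) * b ≠ b * a :=
    fun h => hab (Subtype.ext (by simpa using h))
  suffices ∃ k ∈ G, Tendsto (fun n : ℕ => ‖(k : Matrix (Fin 2) (Fin 2) ℝ) ^ n‖) atTop atTop by
    obtain ⟨k, hk, hlim⟩ := this
    exact isContracting_of_tendsto_norm (fun n => pow_mem hk n) (by simpa using hlim)
  by_cases htr : 2 ≤ |(a : Matrix (Fin 2) (Fin 2) ℝ).trace|
  · refine ⟨a, ha, tendsto_norm_pow_atTop_of_two_le_abs_trace a.2 htr ?_ ?_⟩ <;>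
      rintro h <;> simp [h] at hAB
  · have hell : (a : Matrix (Fin 2) (Fin 2) ℝ).trace ^ 2 <
        4 * (a : Matrix (Fin 2) (Fin 2) ℝ).det := by
      rw [Matrix.SpecialLinearGroup.det_coe, mul_one, ← sq_abs]
      nlinarith [abs_nonneg (a : Matrix (Fin 2) (Fin 2) ℝ).trace]
    refine ⟨⁅a, b⁆, mul_mem (mul_mem (mul_mem ha hb) (inv_mem ha)) (inv_mem hb),
      tendsto_norm_pow_atTop_of_two_lt_trace (⁅a, b⁆ : SL2R).2 ?_⟩
    rw [SpecialLinearGroup.trace_commutatorElement_fin_two]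
    linarith [det_mul_sub_mul_neg_of_sq_trace_lt hell hAB]
end

section
/- Let A : ℂ → SL(2,ℂ) be real-analytic (its matrix entries are entire analytic functions taking real values on ℝ) with z ↦ tr A(z) nonconstant, and suppose tr A(z) ∈ [−2,2] implies z ∈ ℝ. Then for any countable set D₀ ⊆ ℂ there exists w ∈ ℝ \ D₀ such that A(w) has real entries and tr A(w) ∈ (−2,2), i.e., A(w) is an elliptic element of SL(2,ℝ). -/
open Matrix Filter Topology

attribute [local instance] Matrix.normedAddCommGroup

/-!
Let `f = tr A`, an entire function real on `ℝ`. If `f` took no value in `(-2, 2)` on `ℝ`, then,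
since `f` takes values in `[-2, 2]` only on `ℝ`, it would omit the segment `[-1, 1]`. The Möbius
map `w ↦ (w - 1) / (w + 1)` sends the complement of that segment into the slit plane, where the
principal logarithm is holomorphic with imaginary part `> -π`; Liouville's theorem applied to
`exp (I * log ((f - 1) / (f + 1)))` then forces `f` to be constant. Hence
`{x : ℝ | f x ∈ (-2, 2)}` is a nonempty open subset of `ℝ`, so it is not covered by `D₀`.
-/

section

open Complex

theorem Differentiable.apply_eq_apply_of_le_im {g : ℂ → ℂ} (hg : Differentiable ℂ g) {c : ℝ}
    (hc : ∀ z, c ≤ (g z).im) (z w : ℂ) : g z = g w := by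
  set h : ℂ → ℂ := fun z => cexp (I * g z)
  have hh : Differentiable ℂ h := (hg.const_mul I).cexp
  have h_bdd : Bornology.IsBounded (Set.range h) := by
    refine (Metric.isBounded_closedBall (x := 0) (r := Real.exp (-c))).subset ?_
    rintro _ ⟨z, rfl⟩
    simpa [h, norm_exp] using hc z
  have h_const : h = fun _ => h 0 := funext fun z => hh.apply_eq_apply_of_bounded h_bdd z 0
  refine is_const_of_deriv_eq_zero hg (fun z => ?_) z w
  have hderiv : _root_.deriv h z = h z * (I * _root_.deriv g z) :=
    ((hg z).hasDerivAt.const_mul I).cexp.deriv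
  rw [h_const, deriv_const] at hderiv
  simpa [h, exp_ne_zero, I_ne_zero] using hderiv.symm

theorem Differentiable.apply_eq_apply_of_mem_slitPlane {q : ℂ → ℂ} (hq : Differentiable ℂ q)
    (h_slit : ∀ z, q z ∈ slitPlane) (z w : ℂ) : q z = q w := by
  have hlog : Differentiable ℂ (Complex.log ∘ q) :=
    fun z => (differentiableAt_log (h_slit z)).comp z (hq z)
  have h_eq := hlog.apply_eq_apply_of_le_im (c := -Real.pi)
    (fun z => by simpa [log_im] using (neg_pi_lt_arg (q z)).le) z w
  rw [← exp_log (slitPlane_ne_zero (h_slit z)), ← exp_log (slitPlane_ne_zero (h_slit w))]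
  exact congrArg cexp h_eq

theorem Complex.div_sub_mem_slitPlane {a b : ℝ} {w : ℂ} (hab : a < b)
    (hw : w.im = 0 → w.re ∉ Set.Icc a b) : (w - b) / (w - a) ∈ slitPlane := by
  have hwa : w - a ≠ 0 := fun h =>
    hw (by simp [sub_eq_zero.1 h]) (by simp [sub_eq_zero.1 h, hab.le])
  set t := ((w - b) / (w - a)).re
  by_contra h_slit
  rw [mem_slitPlane_iff, not_or, not_lt, not_not] at h_slit
  have ht : (w - b) / (w - a) = t := ext rfl (by simpa using h_slit.2)
  have h1t : 0 < 1 - t := by linarith [h_slit.1]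
  have hw_eq : w = ((b - t * a) / (1 - t) : ℝ) := by
    rw [div_eq_iff hwa] at ht
    have : (1 - t : ℂ) ≠ 0 := by exact_mod_cast h1t.ne'
    push_cast
    rw [eq_div_iff this]
    linear_combination ht
  refine hw (by rw [hw_eq, ofReal_im]) ?_
  rw [hw_eq, ofReal_re, Set.mem_Icc, le_div_iff₀ h1t, div_le_iff₀ h1t]
  constructor <;> nlinarith [h_slit.1]

theorem Differentiable.apply_eq_apply_of_forall_notMem_Icc {f : ℂ → ℂ} (hf : Differentiable ℂ f)
    {a b : ℝ} (hab : a < b) (h_omit : ∀ z, (f z).im = 0 → (f z).re ∉ Set.Icc a b) (z w : ℂ) :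
    f z = f w := by
  have h_ne : ∀ z, f z - a ≠ 0 := fun z h =>
    h_omit z (by simp [sub_eq_zero.1 h]) (by simp [sub_eq_zero.1 h, hab.le])
  have hmob : Differentiable ℂ fun z => (f z - b) / (f z - a) :=
    (hf.sub_const _).div (hf.sub_const _) h_ne
  have hq := hmob.apply_eq_apply_of_mem_slitPlane
    (fun z => div_sub_mem_slitPlane hab (h_omit z)) z w
  rw [div_eq_div_iff (h_ne z) (h_ne w)] at hq
  have hba : (b : ℂ) - a ≠ 0 := sub_ne_zero.2 (by exact_mod_cast hab.ne')
  exact mul_left_cancel₀ hba (by linear_combination hq)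

end

/-- If `A : ℂ → SL(2,ℂ)` is real-analytic with nonconstant trace and its
trace lies in `[-2,2]` only at real points, then for any countable `D₀ ⊆ ℂ` there is a real
`w ∉ D₀` at which `A(w)` has real entries and is elliptic. -/
theorem exists_real_elliptic_point (A : ℂ → Matrix.SpecialLinearGroup (Fin 2) ℂ)
    (hAanal : ∀ i j, Differentiable ℂ fun z => ((A z : Matrix (Fin 2) (Fin 2) ℂ) i j))
    (hAreal : ∀ (x : ℝ) (i j), ((A x : Matrix (Fin 2) (Fin 2) ℂ) i j).im = 0)
    (hAtr : ¬ ∃ c : ℂ, ∀ z, Matrix.trace ((A z : Matrix (Fin 2) (Fin 2) ℂ)) = c)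
    (hAell : ∀ z : ℂ, (Matrix.trace ((A z : Matrix (Fin 2) (Fin 2) ℂ))).im = 0 →
      (Matrix.trace ((A z : Matrix (Fin 2) (Fin 2) ℂ))).re ∈ Set.Icc (-2 : ℝ) 2 → z.im = 0)
    (D₀ : Set ℂ) (hD₀ : D₀.Countable) :
    ∃ w : ℝ, (w : ℂ) ∉ D₀ ∧
      (∀ i j, ((A w : Matrix (Fin 2) (Fin 2) ℂ) i j).im = 0) ∧
      (Matrix.trace ((A w : Matrix (Fin 2) (Fin 2) ℂ))).im = 0 ∧
      (Matrix.trace ((A w : Matrix (Fin 2) (Fin 2) ℂ))).re ∈ Set.Ioo (-2 : ℝ) 2 := by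
  set f : ℂ → ℂ := fun z => Matrix.trace (A z : Matrix (Fin 2) (Fin 2) ℂ) with hf_def
  have hf : Differentiable ℂ f := by
    simp only [hf_def, Matrix.trace_fin_two]
    exact (hAanal 0 0).add (hAanal 1 1)
  have hf_real (x : ℝ) : (f x).im = 0 := by
    simp [hf_def, Matrix.trace_fin_two, hAreal x 0 0, hAreal x 1 1]
  set S := {x : ℝ | (f x).re ∈ Set.Ioo (-2 : ℝ) 2}
  have hS_open : IsOpen S :=
    isOpen_Ioo.preimage (Complex.continuous_re.comp (hf.continuous.comp Complex.continuous_ofReal))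
  have hS_nonempty : S.Nonempty := by
    by_contra hS
    refine hAtr ⟨f 0, fun z => hf.apply_eq_apply_of_forall_notMem_Icc (a := -1) (b := 1)
      (by norm_num) (fun z him hre => hS ⟨z.re, ?_⟩) z 0⟩
    have hz : (z.re : ℂ) = z :=
      Complex.ext rfl (hAell z him ⟨by linarith [hre.1], by linarith [hre.2]⟩).symm
    rw [Set.mem_ofPred_eq, hz]
    exact ⟨by linarith [hre.1], by linarith [hre.2]⟩
  obtain ⟨w, hwS, hwD⟩ :=
    ((hD₀.preimage Complex.ofReal_injective).dense_compl ℝ).inter_open_nonempty S hS_open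
      hS_nonempty
  exact ⟨w, hwD, hAreal w, hf_real w, hwS⟩
end
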